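/- arXiv:1611.00958 — 5 statements merged into one kernel-verified Lean document; each statement's English description precedes it below -/
import Mathlib

section
/- Let p, q be unit quaternions and let U, V be purely imaginary-translated tangent vectors, i.e. U = p·α and V = q·β with α, β imaginary quaternions. Define J(U,V) = (1/√3)·(2·p·q⁻¹·V − U, −2·q·p⁻¹·U + V). Then J(J(U,V)) = −(U,V), i.e. J is an almost complex structure on T_p S³ ⊕ T_q S³. -/
open scoped Quaternion RealInnerProductSpace

/-- The almost complex structure of the nearly Kähler `S³ × S³` at the point `(p,q)`. -/
noncomputable def J (p q : ℍ[ℝ]) (W : ℍ[ℝ] × ℍ[ℝ]) : ℍ[ℝ] × ℍ[ℝ] :=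
  ((Real.sqrt 3)⁻¹ • (2 * (p * q⁻¹ * W.2) - W.1),
   (Real.sqrt 3)⁻¹ • (-(2 * (q * p⁻¹ * W.1)) + W.2))

/-- `J` squares to minus the identity on tangent vectors `(p·α, q·β)` with `α, β`
imaginary quaternions, i.e. `J` is an almost complex structure on `T_p S³ ⊕ T_q S³`. -/
theorem J_sq_eq_neg_id (p q : ℍ[ℝ]) (hp : ‖p‖ = 1) (hq : ‖q‖ = 1)
    (α β : ℍ[ℝ]) (hα : α.re = 0) (hβ : β.re = 0)
    (U V : ℍ[ℝ]) (hU : U = p * α) (hV : V = q * β) :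
    J p q (J p q (U, V)) = (-U, -V) := by
  have hp0 : p ≠ 0 := by intro h; rw [h, norm_zero] at hp; norm_num at hp
  have hq0 : q ≠ 0 := by intro h; rw [h, norm_zero] at hq; norm_num at hq
  have hpq : p * q⁻¹ * (q * p⁻¹) = 1 := by
    rw [mul_assoc, ← mul_assoc q⁻¹, inv_mul_cancel₀ hq0, one_mul, mul_inv_cancel₀ hp0]
  have hqp : q * p⁻¹ * (p * q⁻¹) = 1 := by
    rw [mul_assoc, ← mul_assoc p⁻¹, inv_mul_cancel₀ hp0, one_mul, mul_inv_cancel₀ hq0]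
  have h3 : ((Real.sqrt 3)⁻¹ : ℝ) * (Real.sqrt 3)⁻¹ = 3⁻¹ := by
    rw [← mul_inv, Real.mul_self_sqrt (by norm_num)]
  have hm : ∀ W : ℍ[ℝ], -(4 * W) + W = (-3 : ℝ) • W := by
    intro W
    rw [show ((-3:ℝ) • W) = ((-3:ℝ) : ℍ[ℝ]) * W from (Quaternion.coe_mul_eq_smul _ _).symm,
      show ((-3:ℝ) : ℍ[ℝ]) = -3 by
        rw [show ((-3:ℝ):ℍ[ℝ]) = algebraMap ℝ _ (-3) from rfl, map_neg, map_ofNat]]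
    noncomm_ring
  simp only [J, Prod.mk.injEq]
  constructor
  · rw [mul_smul_comm, mul_smul_comm, ← smul_sub, smul_smul, h3,
      show 2 * (p * q⁻¹ * (-(2 * (q * p⁻¹ * U)) + V)) - (2 * (p * q⁻¹ * V) - U)
        = -(4 * ((p * q⁻¹ * (q * p⁻¹)) * U)) + U by noncomm_ring,
      hpq, one_mul, hm, smul_smul]
    norm_num
  · rw [mul_smul_comm, mul_smul_comm, ← smul_neg, ← smul_add, smul_smul, h3,
      show -(2 * (q * p⁻¹ * (2 * (p * q⁻¹ * V) - U))) + (-(2 * (q * p⁻¹ * U)) + V)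
        = -(4 * ((q * p⁻¹ * (p * q⁻¹)) * V)) + V by noncomm_ring,
      hqp, one_mul, hm, smul_smul]
    norm_num
end

section
/- Let θ₁, θ₂, θ₃ ∈ ℝ with sin(θ_i − θ_j) ≠ 0 for all i ≠ j, and suppose there exists h ≠ 0 satisfying the three equations: 2h² − (1/√3)·(sin(θ₁−θ₃)sin(θ₂−θ₃)/sin(θ₁−θ₂))·h − (2/3)cos(θ₁−θ₂)sin(θ₁−θ₃)sin(θ₂−θ₃) = 0, 2h² − (1/√3)·(sin(θ₁−θ₂)sin(θ₁−θ₃)/sin(θ₂−θ₃))·h − (2/3)cos(θ₂−θ₃)sin(θ₁−θ₂)sin(θ₁−θ₃) = 0, and 2h² − (1/√3)·(sin(θ₂−θ₃)sin(θ₁−θ₂)/sin(θ₁−θ₃))·h + (2/3)cos(θ₁−θ₃)sin(θ₂−θ₃)sin(θ₁−θ₂) = 0. Then sin(θ₁+θ₂−2θ₃)·sin(θ₂+θ₃−2θ₁)·sin(θ₁+θ₃−2θ₂) = 0. -/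
open Real

/-- If the three Codazzi-type equations for constant angle functions admit a common
nonzero solution `h`, then `sin(θ₁+θ₂−2θ₃) sin(θ₂+θ₃−2θ₁) sin(θ₁+θ₃−2θ₂) = 0`. -/
theorem constant_angles_determinant (θ₁ θ₂ θ₃ h : ℝ)
    (h12 : sin (θ₁ - θ₂) ≠ 0) (h13 : sin (θ₁ - θ₃) ≠ 0) (h23 : sin (θ₂ - θ₃) ≠ 0)
    (hh : h ≠ 0)
    (e1 : 2 * h ^ 2 - (1 / Real.sqrt 3) * (sin (θ₁ - θ₃) * sin (θ₂ - θ₃) / sin (θ₁ - θ₂)) * h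
      - (2 / 3) * cos (θ₁ - θ₂) * sin (θ₁ - θ₃) * sin (θ₂ - θ₃) = 0)
    (e2 : 2 * h ^ 2 - (1 / Real.sqrt 3) * (sin (θ₁ - θ₂) * sin (θ₁ - θ₃) / sin (θ₂ - θ₃)) * h
      - (2 / 3) * cos (θ₂ - θ₃) * sin (θ₁ - θ₂) * sin (θ₁ - θ₃) = 0)
    (e3 : 2 * h ^ 2 - (1 / Real.sqrt 3) * (sin (θ₂ - θ₃) * sin (θ₁ - θ₂) / sin (θ₁ - θ₃)) * h
      + (2 / 3) * cos (θ₁ - θ₃) * sin (θ₂ - θ₃) * sin (θ₁ - θ₂) = 0) :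
    sin (θ₁ + θ₂ - 2 * θ₃) * sin (θ₂ + θ₃ - 2 * θ₁) * sin (θ₁ + θ₃ - 2 * θ₂) = 0 := by
  have hs0 : Real.sqrt 3 ≠ 0 := by positivity
  field_simp at e1 e2 e3
  -- abbreviations
  have sq_diff : ∀ x y : ℝ, sin x ^ 2 - sin y ^ 2 = sin (x + y) * sin (x - y) := by
    intro x y; rw [sin_add, sin_sub]
    linear_combination (sin y ^ 2) * (sin_sq_add_cos_sq x) - (sin x ^ 2) * (sin_sq_add_cos_sq y)
  -- I1 : a² − c² = b · X₂
  have I1 : sin (θ₁ - θ₂) ^ 2 - sin (θ₂ - θ₃) ^ 2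
      = sin (θ₁ - θ₃) * sin (θ₁ + θ₃ - 2 * θ₂) := by
    have := sq_diff (θ₁ - θ₂) (θ₂ - θ₃)
    rw [show (θ₁ - θ₂) + (θ₂ - θ₃) = θ₁ - θ₃ by ring,
        show (θ₁ - θ₂) - (θ₂ - θ₃) = θ₁ + θ₃ - 2 * θ₂ by ring] at this
    exact this
  -- I2 : c·cos A − a·cos C = −X₂
  have I2 : sin (θ₂ - θ₃) * cos (θ₁ - θ₂) - sin (θ₁ - θ₂) * cos (θ₂ - θ₃)
      = -sin (θ₁ + θ₃ - 2 * θ₂) := by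
    have := sin_sub (θ₂ - θ₃) (θ₁ - θ₂)
    rw [show (θ₂ - θ₃) - (θ₁ - θ₂) = -(θ₁ + θ₃ - 2 * θ₂) by ring, sin_neg] at this
    linarith
  -- I3 : b² − a² = −c · X₁
  have I3 : sin (θ₁ - θ₃) ^ 2 - sin (θ₁ - θ₂) ^ 2
      = -(sin (θ₂ - θ₃) * sin (θ₂ + θ₃ - 2 * θ₁)) := by
    have := sq_diff (θ₁ - θ₃) (θ₁ - θ₂)
    rw [show (θ₁ - θ₃) + (θ₁ - θ₂) = -(θ₂ + θ₃ - 2 * θ₁) by ring,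
        show (θ₁ - θ₃) - (θ₁ - θ₂) = θ₂ - θ₃ by ring, sin_neg] at this
    linarith
  -- I4 : b·cos A + a·cos B = −X₁
  have I4 : sin (θ₁ - θ₃) * cos (θ₁ - θ₂) + sin (θ₁ - θ₂) * cos (θ₁ - θ₃)
      = -sin (θ₂ + θ₃ - 2 * θ₁) := by
    have := sin_add (θ₁ - θ₃) (θ₁ - θ₂)
    rw [show (θ₁ - θ₃) + (θ₁ - θ₂) = -(θ₂ + θ₃ - 2 * θ₁) by ring, sin_neg] at this
    linarith
  -- I5 : b² − c² = a · X₃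
  have I5 : sin (θ₁ - θ₃) ^ 2 - sin (θ₂ - θ₃) ^ 2
      = sin (θ₁ - θ₂) * sin (θ₁ + θ₂ - 2 * θ₃) := by
    have := sq_diff (θ₁ - θ₃) (θ₂ - θ₃)
    rw [show (θ₁ - θ₃) + (θ₂ - θ₃) = θ₁ + θ₂ - 2 * θ₃ by ring,
        show (θ₁ - θ₃) - (θ₂ - θ₃) = θ₁ - θ₂ by ring] at this
    linarith [this]
  -- key 1 : X₂ · (3 h b + 2 √3 a c) = 0
  have key1 : sin (θ₁ + θ₃ - 2 * θ₂) *
      (3 * h * sin (θ₁ - θ₃) + 2 * Real.sqrt 3 * sin (θ₁ - θ₂) * sin (θ₂ - θ₃)) = 0 := by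
    have hb : sin (θ₁ - θ₃) * (sin (θ₁ + θ₃ - 2 * θ₂) *
        (3 * h * sin (θ₁ - θ₃) + 2 * Real.sqrt 3 * sin (θ₁ - θ₂) * sin (θ₂ - θ₃))) = 0 := by
      linear_combination sin (θ₂ - θ₃) * e1 - sin (θ₁ - θ₂) * e2
        - 3 * h * sin (θ₁ - θ₃) * I1
        + 2 * Real.sqrt 3 * sin (θ₁ - θ₂) * sin (θ₁ - θ₃) * sin (θ₂ - θ₃) * I2
    rcases mul_eq_zero.mp hb with h' | h'
    · exact absurd h' h13
    · exact h'
  -- key 2 : X₁ · (3 h c + 2 √3 a b) = 0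
  have key2 : sin (θ₂ + θ₃ - 2 * θ₁) *
      (3 * h * sin (θ₂ - θ₃) + 2 * Real.sqrt 3 * sin (θ₁ - θ₂) * sin (θ₁ - θ₃)) = 0 := by
    have hc : sin (θ₂ - θ₃) * (sin (θ₂ + θ₃ - 2 * θ₁) *
        (3 * h * sin (θ₂ - θ₃) + 2 * Real.sqrt 3 * sin (θ₁ - θ₂) * sin (θ₁ - θ₃))) = 0 := by
      linear_combination sin (θ₁ - θ₃) * e1 - sin (θ₁ - θ₂) * e3
        + 3 * h * sin (θ₂ - θ₃) * I3
        + 2 * Real.sqrt 3 * sin (θ₁ - θ₂) * sin (θ₁ - θ₃) * sin (θ₂ - θ₃) * I4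
    rcases mul_eq_zero.mp hc with h' | h'
    · exact absurd h' h23
    · exact h'
  rcases mul_eq_zero.mp key1 with hX2 | k1
  · simp [hX2]
  rcases mul_eq_zero.mp key2 with hX1 | k2
  · simp [hX1]
  -- final case: 3hb = −2√3 ac  and 3hc = −2√3 ab  ⇒ b² = c² ⇒ X₃ = 0
  have hbc : sin (θ₁ - θ₃) ^ 2 - sin (θ₂ - θ₃) ^ 2 = 0 := by
    have h2 : 2 * Real.sqrt 3 * sin (θ₁ - θ₂) *
        (sin (θ₁ - θ₃) ^ 2 - sin (θ₂ - θ₃) ^ 2) = 0 := by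
      linear_combination sin (θ₁ - θ₃) * k2 - sin (θ₂ - θ₃) * k1
    have h3 : (2 : ℝ) * Real.sqrt 3 * sin (θ₁ - θ₂) ≠ 0 := by
      simp [hs0, h12]
    exact (mul_eq_zero.mp h2).resolve_left h3
  have hX3 : sin (θ₁ + θ₂ - 2 * θ₃) = 0 := by
    have := I5
    rw [hbc] at this
    exact ((mul_eq_zero.mp this.symm).resolve_left h12)
  simp [hX3]
end

section
/- Let α ∈ ℝ with sin α ≠ 0 and sin(2α) ≠ 0, and let h ∈ ℝ, h ≠ 0, satisfy both 2h² − (1/√3)sin(2α)·h − (1/3)sin²(2α) = 0 and 2h² − (1/√3)·(sin²α / sin(2α))·h + (2/3)sin²α·cos(2α) = 0. Then exactly one of the following holds: (a) h = −1/2 and α = −π/3 + kπ for some integer k; (b) h = −1/4 and α = π/3 + kπ; (c) h = 1/4 and α = −π/3 + kπ; (d) h = 1/2 and α = π/3 + kπ. -/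
open Real

/-!
With `s = sin 2α`, the first equation factors as `(√3 h - s)(2√3 h + s) = 0`, and
`3 s (e₂ - e₁) = sin²α (2 cos 2α + 1)(√3 h + 2 s)`. Neither root of the first equation is
compatible with `√3 h + 2 s = 0` unless `s = 0`, so `cos 2α = -1/2`. This pins `α` to
`±π/3 mod π` and `s` to `±√3/2`, and the two roots of the first equation give the values
of `h`.
-/

theorem sqrt_three_mul_eq_or_of_quadratic {h s : ℝ}
    (e : 2 * h ^ 2 - (1 / √3) * s * h - (1 / 3) * s ^ 2 = 0) :
    √3 * h = s ∨ 2 * √3 * h = -s := by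
  rw [← sqrt_div_self'] at e
  have : (√3 * h - s) * (2 * √3 * h + s) = 0 := by
    linear_combination 3 * e + 2 * h ^ 2 * sq_sqrt (show (0 : ℝ) ≤ 3 by norm_num)
  rcases mul_eq_zero.mp this with h1 | h1
  · exact Or.inl (by linarith)
  · exact Or.inr (by linarith)

theorem two_cos_two_mul_add_one_mul_eq_zero {α h : ℝ} (h2α : sin (2 * α) ≠ 0)
    (e1 : 2 * h ^ 2 - (1 / √3) * sin (2 * α) * h - (1 / 3) * sin (2 * α) ^ 2 = 0)
    (e2 : 2 * h ^ 2 - (1 / √3) * (sin α ^ 2 / sin (2 * α)) * h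
      + (2 / 3) * sin α ^ 2 * cos (2 * α) = 0) :
    (2 * cos (2 * α) + 1) * (√3 * h + 2 * sin (2 * α)) = 0 := by
  have hsα : sin α ≠ 0 := fun h0 => h2α (by rw [sin_two_mul, h0]; ring)
  rw [← sqrt_div_self'] at e1 e2
  field_simp at e2
  simp only [sin_two_mul, cos_two_mul] at e1 e2 ⊢
  have : sin α ^ 2 * ((2 * (2 * cos α ^ 2 - 1) + 1) *
      (√3 * h + 2 * (2 * sin α * cos α))) = 0 := by
    linear_combination e2 - 6 * sin α * cos α * e1
  exact (mul_eq_zero.mp this).resolve_left (pow_ne_zero 2 hsα)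

theorem sin_two_mul_eq_and_eq_of_cos_two_mul_eq_neg_half {α : ℝ} (h : cos (2 * α) = -(1 / 2)) :
    (sin (2 * α) = √3 / 2 ∧ ∃ k : ℤ, α = π / 3 + k * π) ∨
    (sin (2 * α) = -(√3 / 2) ∧ ∃ k : ℤ, α = -(π / 3) + k * π) := by
  have : cos (π - π / 3) = cos (2 * α) := by rw [cos_pi_sub, cos_pi_div_three, h]
  obtain ⟨k, hk | hk⟩ := cos_eq_cos_iff.mp this
  · refine Or.inl ⟨?_, k, by linarith⟩
    rw [hk, show 2 * k * π + (π - π / 3) = π - π / 3 + k * (2 * π) by ring,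
      sin_add_int_mul_two_pi, sin_pi_sub, sin_pi_div_three]
  · refine Or.inr ⟨?_, k, by linarith⟩
    rw [hk, show 2 * k * π - (π - π / 3) = -(π - π / 3) + k * (2 * π) by ring,
      sin_add_int_mul_two_pi, sin_neg, sin_pi_sub, sin_pi_div_three]

theorem reduced_system_solutions_general (α h : ℝ)
    (h2α : sin (2 * α) ≠ 0)
    (e1 : 2 * h ^ 2 - (1 / Real.sqrt 3) * sin (2 * α) * h - (1 / 3) * sin (2 * α) ^ 2 = 0)
    (e2 : 2 * h ^ 2 - (1 / Real.sqrt 3) * (sin α ^ 2 / sin (2 * α)) * h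
      + (2 / 3) * sin α ^ 2 * cos (2 * α) = 0) :
    (h = -(1 / 2) ∧ ∃ k : ℤ, α = -(π / 3) + k * π) ∨
    (h = -(1 / 4) ∧ ∃ k : ℤ, α = π / 3 + k * π) ∨
    (h = 1 / 4 ∧ ∃ k : ℤ, α = -(π / 3) + k * π) ∨
    (h = 1 / 2 ∧ ∃ k : ℤ, α = π / 3 + k * π) := by
  have hquad := sqrt_three_mul_eq_or_of_quadratic e1
  rcases mul_eq_zero.mp (two_cos_two_mul_add_one_mul_eq_zero h2α e1 e2) with hcos | hlin
  · have cancel : ∀ x y : ℝ, √3 * x = √3 * y → x = y :=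
      fun _ _ ↦ mul_left_cancel₀ (by positivity)
    rcases sin_two_mul_eq_and_eq_of_cos_two_mul_eq_neg_half (α := α) (by linarith) with
      ⟨hs, hk⟩ | ⟨hs, hk⟩ <;> rw [hs] at hquad
    · rcases hquad with hquad | hquad
      · exact Or.inr (Or.inr (Or.inr ⟨cancel _ _ (by linarith), hk⟩))
      · exact Or.inr (Or.inl ⟨cancel _ _ (by linarith), hk⟩)
    · rcases hquad with hquad | hquad
      · exact Or.inl ⟨cancel _ _ (by linarith), hk⟩
      · exact Or.inr (Or.inr (Or.inl ⟨cancel _ _ (by linarith), hk⟩))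
  · exact (h2α (by rcases hquad with hquad | hquad <;> linarith)).elim

/-- Solutions of the reduced Codazzi–Gauss system for `θ₂ = π/3`, `θ₁ + θ₃ = 2π/3`:
a nonzero `h` satisfying both equations forces exactly one of four explicit cases. -/
theorem reduced_system_solutions (α h : ℝ)
    (hα : sin α ≠ 0) (h2α : sin (2 * α) ≠ 0) (hh : h ≠ 0)
    (e1 : 2 * h ^ 2 - (1 / Real.sqrt 3) * sin (2 * α) * h - (1 / 3) * sin (2 * α) ^ 2 = 0)
    (e2 : 2 * h ^ 2 - (1 / Real.sqrt 3) * (sin α ^ 2 / sin (2 * α)) * h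
      + (2 / 3) * sin α ^ 2 * cos (2 * α) = 0) :
    (h = -(1 / 2) ∧ ∃ k : ℤ, α = -(π / 3) + k * π) ∨
    (h = -(1 / 4) ∧ ∃ k : ℤ, α = π / 3 + k * π) ∨
    (h = 1 / 4 ∧ ∃ k : ℤ, α = -(π / 3) + k * π) ∨
    (h = 1 / 2 ∧ ∃ k : ℤ, α = π / 3 + k * π) :=
  reduced_system_solutions_general α h h2α e1 e2
end

section
/- For all real numbers c and Λ, the expression (cos(4Λ) − 2cos(2Λ)cos(3c) + 12A + 1)·cot(3c/2 − Λ) − (sin(4Λ) − 2cos(2Λ)sin(3c) − 3sin(2Λ)cos(3c) − 12A·cot(Λ + 3c/2)) simplifies as follows: if A = (h₁₂³)² + (h₁₃³)² satisfies both cos(4Λ) − 2cos(2Λ)cos(3c) + 12A + 1 = 0 and sin(4Λ) − 2cos(2Λ)sin(3c) − 3sin(2Λ)cos(3c) − 12A·cot(Λ + 3c/2) = 0, and sin(3c/2 − Λ) ≠ 0, sin(Λ + 3c/2) ≠ 0, then cos(3c)·sin(2Λ) = 0. -/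
open Real

lemma elim_aux (x y : ℝ) :
    (sin (2 * (2 * x)) - 2 * cos (2 * x) * sin (2 * y) - 3 * sin (2 * x) * cos (2 * y))
      * sin (x + y)
    + (cos (2 * (2 * x)) - 2 * cos (2 * x) * cos (2 * y) + 1) * cos (x + y)
    = -3 * (cos (2 * y) * sin (2 * x)) * sin (x + y) := by
  rw [cos_two_mul (2 * x), sin_two_mul (2 * x), sin_two_mul x, cos_two_mul x,
    sin_two_mul y, cos_two_mul y, sin_add, cos_add]
  linear_combination ((-4 : ℝ) * cos x * cos y + 8 * cos x ^ 3 * cos y) * sin_sq_add_cos_sq x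
    + ((4 : ℝ) * cos x * cos y - 8 * cos x ^ 3 * cos y) * sin_sq_add_cos_sq y

/-- The trigonometric elimination step: if `A ≥ 0` satisfies the two relations coming
from the derivative computation, then `cos(3c) sin(2Λ) = 0`. -/
theorem elimination_step (c Λ A : ℝ) (hA : 0 ≤ A)
    (hs1 : sin (3 * c / 2 - Λ) ≠ 0) (hs2 : sin (Λ + 3 * c / 2) ≠ 0)
    (e1 : cos (4 * Λ) - 2 * cos (2 * Λ) * cos (3 * c) + 12 * A + 1 = 0)
    (e2 : sin (4 * Λ) - 2 * cos (2 * Λ) * sin (3 * c) - 3 * sin (2 * Λ) * cos (3 * c)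
      - 12 * A * (cos (Λ + 3 * c / 2) / sin (Λ + 3 * c / 2)) = 0) :
    cos (3 * c) * sin (2 * Λ) = 0 := by
  have e2' : (sin (4 * Λ) - 2 * cos (2 * Λ) * sin (3 * c) - 3 * sin (2 * Λ) * cos (3 * c))
      * sin (Λ + 3 * c / 2) - 12 * A * cos (Λ + 3 * c / 2) = 0 := by
    linear_combination sin (Λ + 3 * c / 2) * e2
      + 12 * A * (div_mul_cancel₀ (cos (Λ + 3 * c / 2)) hs2)
  have key := elim_aux Λ (3 * c / 2)
  rw [show 2 * (2 * Λ) = 4 * Λ by ring, show 2 * (3 * c / 2) = 3 * c by ring] at key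
  have h0 : -3 * (cos (3 * c) * sin (2 * Λ)) * sin (Λ + 3 * c / 2) = 0 := by
    have h12A : (12 : ℝ) * A = -(cos (4 * Λ) - 2 * cos (2 * Λ) * cos (3 * c) + 1) := by
      linarith
    rw [h12A] at e2'
    linarith [key, e2']
  rcases mul_eq_zero.mp h0 with h | h
  · rcases mul_eq_zero.mp h with h' | h'
    · linarith
    · exact h'
  · exact absurd h hs2
end

section
/- Let c, Λ ∈ ℝ with sin(2Λ) ≠ 0, sin(3c/2 − Λ) ≠ 0, cot(2Λ) + cot(3c/2 − Λ) ≠ 0. Suppose h ∈ ℝ satisfies h = (cos(3c) − cos(2Λ))·csc(2Λ)/√3 and h² = (√3·h − sin(2Λ + 3c)) / (6(cot(2Λ) + cot(3c/2 − Λ))). Then csc²(2Λ)·(cos(3c) − cos(2Λ))·(−9cos(2Λ) + cos(6Λ) + 8cos(3c)) = 0. -/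
/-!
Put `x = 3c/2`, `y = Λ`. Then `cos 3c - cos 2Λ = -2 sin (x + y) sin (x - y)` and
`cot 2Λ + cot (3c/2 - Λ) = sin (x + y) / (sin 2y sin (x - y))`, so after substituting `h` the
quadratic relation carries the factor `2 sin² (x + y) sin (x - y)`; cancelling it leaves
`cos 2Λ sin² 2Λ = 2 (cos 3c - cos 2Λ)`. On the other hand `cos 6Λ = 4 cos³ 2Λ - 3 cos 2Λ`
rewrites the last factor of the claim as `8 (cos 3c - cos 2Λ) - 4 cos 2Λ sin² 2Λ`, which is zero.
-/

open Real

theorem Real.cos_div_sin_add_cos_div_sin {x y : ℝ} (hx : sin x ≠ 0) (hy : sin y ≠ 0) :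
    cos x / sin x + cos y / sin y = sin (x + y) / (sin x * sin y) := by
  rw [sin_add]
  field_simp
  ring

theorem cos_two_mul_mul_sin_two_mul_sq_of_quadratic {x y t : ℝ} (hp : sin (x + y) ≠ 0)
    (hm : sin (x - y) ≠ 0) (ht : t * sin (2 * y) = -2 * sin (x + y) * sin (x - y))
    (hquad : 2 * t ^ 2 * sin (x + y) =
      (t - sin (2 * (x + y))) * (sin (2 * y) * sin (x - y))) :
    cos (2 * y) * sin (2 * y) ^ 2 = -4 * sin (x + y) * sin (x - y) := by
  have hdiff : sin (x - y) + cos (x + y) * sin (2 * y) = sin (x + y) * cos (2 * y) := by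
    rw [show x - y = x + y - 2 * y by ring, sin_sub]; ring
  have hfactor : 2 * sin (x + y) ^ 2 * sin (x - y) *
      (cos (2 * y) * sin (2 * y) ^ 2 + 4 * sin (x + y) * sin (x - y)) = 0 := by
    rw [sin_two_mul (x + y)] at hquad
    linear_combination sin (2 * y) ^ 2 * hquad
      - (2 * sin (x + y) * (t * sin (2 * y) - 2 * sin (x + y) * sin (x - y))
        - sin (2 * y) ^ 2 * sin (x - y)) * ht
      - 2 * sin (x + y) * sin (2 * y) ^ 2 * sin (x - y) * hdiff
  linear_combination (mul_eq_zero.mp hfactor).resolve_left (by positivity)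

/-- Substituting the explicit formula for `h` into the quadratic relation yields the
trigonometric compatibility condition. -/
theorem compatibility_condition (c Λ h : ℝ)
    (h2Λ : sin (2 * Λ) ≠ 0) (hs : sin (3 * c / 2 - Λ) ≠ 0)
    (hcot : cos (2 * Λ) / sin (2 * Λ) + cos (3 * c / 2 - Λ) / sin (3 * c / 2 - Λ) ≠ 0)
    (e1 : h = (cos (3 * c) - cos (2 * Λ)) * (1 / sin (2 * Λ)) / Real.sqrt 3)
    (e2 : h ^ 2 = (Real.sqrt 3 * h - sin (2 * Λ + 3 * c)) /
      (6 * (cos (2 * Λ) / sin (2 * Λ) + cos (3 * c / 2 - Λ) / sin (3 * c / 2 - Λ)))) :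
    (1 / sin (2 * Λ)) ^ 2 * (cos (3 * c) - cos (2 * Λ)) *
      (-9 * cos (2 * Λ) + cos (6 * Λ) + 8 * cos (3 * c)) = 0 := by
  have hcot_eq := cos_div_sin_add_cos_div_sin h2Λ hs
  rw [show 2 * Λ + (3 * c / 2 - Λ) = 3 * c / 2 + Λ by ring] at hcot_eq
  have hp : sin (3 * c / 2 + Λ) ≠ 0 := fun h0 => hcot (by rw [hcot_eq, h0, zero_div])
  have hu : cos (3 * c) - cos (2 * Λ) = -2 * sin (3 * c / 2 + Λ) * sin (3 * c / 2 - Λ) := by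
    rw [cos_sub_cos]; ring_nf
  have ht : √3 * h * sin (2 * Λ) = -2 * sin (3 * c / 2 + Λ) * sin (3 * c / 2 - Λ) := by
    rw [e1, ← hu]; field_simp
  have hquad : 2 * (√3 * h) ^ 2 * sin (3 * c / 2 + Λ) =
      (√3 * h - sin (2 * (3 * c / 2 + Λ))) * (sin (2 * Λ) * sin (3 * c / 2 - Λ)) := by
    rw [show 2 * Λ + 3 * c = 2 * (3 * c / 2 + Λ) by ring,
      eq_div_iff (mul_ne_zero (by norm_num) hcot), hcot_eq] at e2
    rw [mul_pow, Real.sq_sqrt (by norm_num : (0 : ℝ) ≤ 3), ← e2]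
    simp only [mul_assoc, div_mul_cancel₀ _ (mul_ne_zero h2Λ hs)]
    ring
  have hcos_sin_sq := cos_two_mul_mul_sin_two_mul_sq_of_quadratic hp hs ht hquad
  rw [show 6 * Λ = 3 * (2 * Λ) by ring, cos_three_mul (2 * Λ)]
  linear_combination (1 / sin (2 * Λ)) ^ 2 * (cos (3 * c) - cos (2 * Λ)) *
    (4 * cos (2 * Λ) * sin_sq_add_cos_sq (2 * Λ) - 4 * hcos_sin_sq + 8 * hu)
end
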